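/- Let P₂, Q₂ be symmetric positive definite p×p matrices with P₂ A₂₂ˢ + (A₂₂ˢ)ᵀ P₂ = −Q₂, and suppose ν(t) = −ρ ‖D₂‖ P₂ e_y(t)/‖P₂ e_y(t)‖ whenever e_y(t) ≠ 0, with ρ > ‖f̄(t)‖ for all t. Then along the dynamics ė_y = A₂₂ˢ e_y + ν − D₂ f̄ (with A₂₁ e₁ ≡ 0), the function V(t) = e_y(t)ᵀ P₂ e_y(t) satisfies V̇(t) ≤ −e_yᵀ Q₂ e_y − 2(ρ − ‖f̄(t)‖)‖D₂‖·‖P₂ e_y(t)‖ ≤ 0, so every sublevel set {v : vᵀ P₂ v ≤ α} is forward-invariant. -/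

import Mathlib

open Matrix

/-- Euclidean norm of a vector. -/
noncomputable def enorm {n : ℕ} (v : Fin n → ℝ) : ℝ := Real.sqrt (∑ i, v i ^ 2)

/-- Spectral (Euclidean-induced operator) norm of a matrix. -/
noncomputable def opNorm {m n : ℕ} (M : Matrix (Fin m) (Fin n) ℝ) : ℝ :=
  sSup {c | ∃ v : Fin n → ℝ, _root_.enorm v ≤ 1 ∧ c = _root_.enorm (M.mulVec v)}

/-!
Along a trajectory, `V = eᵀ P e` has derivative `2 (P e) ⬝ ė`. The Lyapunov equation turns the
drift term `2 (P e) ⬝ A e` into `-eᵀ Q e`, the unit-vector control contributes exactly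
`-2 ρ ‖D‖ ‖P e‖`, and by Cauchy–Schwarz the disturbance contributes at most `2 ‖P e‖ ‖D‖ ‖f̄‖`.
Since `‖f̄‖ < ρ`, `V` is nonincreasing, so its sublevel sets are forward invariant.
-/

theorem enorm_eq_norm_toLp {n : ℕ} (v : Fin n → ℝ) : _root_.enorm v = ‖WithLp.toLp 2 v‖ := by
  simp [_root_.enorm, EuclideanSpace.norm_eq]

theorem enorm_nonneg {n : ℕ} (v : Fin n → ℝ) : 0 ≤ _root_.enorm v :=
  Real.sqrt_nonneg _

theorem abs_dotProduct_le_enorm_mul_enorm {n : ℕ} (v w : Fin n → ℝ) :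
    |v ⬝ᵥ w| ≤ _root_.enorm v * _root_.enorm w := by
  simpa [enorm_eq_norm_toLp, EuclideanSpace.inner_toLp_toLp, dotProduct_comm w v] using
    abs_real_inner_le_norm (WithLp.toLp 2 v) (WithLp.toLp 2 w)

theorem dotProduct_self_eq_enorm_sq {n : ℕ} (v : Fin n → ℝ) : v ⬝ᵥ v = _root_.enorm v ^ 2 := by
  rw [enorm_eq_norm_toLp, ← real_inner_self_eq_norm_sq, EuclideanSpace.inner_toLp_toLp,
    star_trivial]

theorem dotProduct_div_enorm_smul_self {n : ℕ} (k : ℝ) (v : Fin n → ℝ) :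
    v ⬝ᵥ (k / _root_.enorm v) • v = k * _root_.enorm v := by
  rw [dotProduct_smul, smul_eq_mul, dotProduct_self_eq_enorm_sq]
  rcases eq_or_ne (_root_.enorm v) 0 with h | h
  · simp [h]
  · field_simp

section

variable {𝕜 : Type*} [NontriviallyNormedField 𝕜] {ι κ : Type*} [Fintype ι]
  {f g : 𝕜 → ι → 𝕜} {f' g' : ι → 𝕜} {x : 𝕜}

theorem HasDerivAt.dotProduct (hf : HasDerivAt f f' x) (hg : HasDerivAt g g' x) :
    HasDerivAt (fun t => f t ⬝ᵥ g t) (f' ⬝ᵥ g x + f x ⬝ᵥ g') x := by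
  have h := HasDerivAt.fun_sum (u := Finset.univ) fun i _ =>
    (hasDerivAt_pi.1 hf i).mul (hasDerivAt_pi.1 hg i)
  simp only [Pi.mul_apply, Finset.sum_add_distrib] at h
  exact h

theorem HasDerivAt.mulVec (M : Matrix κ ι 𝕜) (hf : HasDerivAt f f' x) :
    HasDerivAt (fun t => M *ᵥ f t) (M *ᵥ f') x :=
  hasDerivAt_pi.2 fun k =>
    HasDerivAt.fun_sum fun i _ => (hasDerivAt_pi.1 hf i).const_mul (M k i)

end

theorem Matrix.IsSymm.dotProduct_mulVec_eq_mulVec_dotProduct {ι R : Type*} [Fintype ι]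
    [CommSemiring R] {P : Matrix ι ι R} (hP : P.IsSymm) (v w : ι → R) :
    v ⬝ᵥ P *ᵥ w = P *ᵥ v ⬝ᵥ w := by
  rw [Matrix.dotProduct_mulVec, ← mulVec_transpose, hP.eq]

theorem HasDerivAt.dotProduct_mulVec_self {ι : Type*} [Fintype ι] {P : Matrix ι ι ℝ}
    (hP : P.IsSymm) {f : ℝ → ι → ℝ} {f' : ι → ℝ} {x : ℝ} (hf : HasDerivAt f f' x) :
    HasDerivAt (fun t => f t ⬝ᵥ P *ᵥ f t) (2 * (P *ᵥ f x ⬝ᵥ f')) x := by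
  refine (hf.dotProduct (hf.mulVec P)).congr_deriv ?_
  rw [hP.dotProduct_mulVec_eq_mulVec_dotProduct (f x), dotProduct_comm f']
  ring

section

open scoped Matrix.Norms.L2Operator

theorem opNorm_eq_l2_opNorm {m n : ℕ} (M : Matrix (Fin m) (Fin n) ℝ) : opNorm M = ‖M‖ := by
  rw [Matrix.l2_opNorm_def, ← ContinuousLinearMap.sSup_unitClosedBall_eq_norm, opNorm]
  congr 1
  ext c
  simp only [enorm_eq_norm_toLp, Set.mem_ofPred_eq, Set.mem_image, Metric.mem_closedBall,
    dist_zero_right, eq_comm (a := c)]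
  constructor
  · rintro ⟨v, hv, rfl⟩
    exact ⟨WithLp.toLp 2 v, hv, rfl⟩
  · rintro ⟨x, hx, rfl⟩
    exact ⟨x.ofLp, hx, rfl⟩

theorem opNorm_nonneg {m n : ℕ} (M : Matrix (Fin m) (Fin n) ℝ) : 0 ≤ opNorm M :=
  opNorm_eq_l2_opNorm M ▸ norm_nonneg M

theorem enorm_mulVec_le_opNorm_mul {m n : ℕ} (M : Matrix (Fin m) (Fin n) ℝ) (v : Fin n → ℝ) :
    _root_.enorm (M *ᵥ v) ≤ opNorm M * _root_.enorm v := by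
  simpa [opNorm_eq_l2_opNorm, enorm_eq_norm_toLp] using M.l2_opNorm_mulVec (WithLp.toLp 2 v)

end

theorem neg_dotProduct_mulVec_le {m n : ℕ} (v : Fin m → ℝ) (M : Matrix (Fin m) (Fin n) ℝ)
    (w : Fin n → ℝ) : -(v ⬝ᵥ M *ᵥ w) ≤ _root_.enorm v * (opNorm M * _root_.enorm w) :=
  calc -(v ⬝ᵥ M *ᵥ w) ≤ |v ⬝ᵥ M *ᵥ w| := neg_le_abs _
    _ ≤ _root_.enorm v * _root_.enorm (M *ᵥ w) := abs_dotProduct_le_enorm_mul_enorm _ _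
    _ ≤ _root_.enorm v * (opNorm M * _root_.enorm w) :=
      mul_le_mul_of_nonneg_left (enorm_mulVec_le_opNorm_mul M w) (enorm_nonneg v)

theorem Matrix.IsSymm.two_mul_mulVec_dotProduct_mulVec_of_lyapunov {ι R : Type*} [Fintype ι]
    [CommRing R] {P A Q : Matrix ι ι R} (hP : P.IsSymm) (hLyap : P * A + Aᵀ * P = -Q)
    (v : ι → R) : 2 * (P *ᵥ v ⬝ᵥ A *ᵥ v) = -(v ⬝ᵥ Q *ᵥ v) := by
  have h := congrArg (fun M => v ⬝ᵥ M *ᵥ v) hLyap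
  simp only [add_mulVec, ← mulVec_mulVec, dotProduct_add, neg_mulVec, dotProduct_neg] at h
  rw [← h, hP.dotProduct_mulVec_eq_mulVec_dotProduct, dotProduct_transpose_mulVec]
  ring

theorem two_mul_dotProduct_slidingMode_le {p q : ℕ} {A P Q : Matrix (Fin p) (Fin p) ℝ}
    (hP : P.IsSymm) (hLyap : P * A + Aᵀ * P = -Q) (D : Matrix (Fin p) (Fin q) ℝ) (ρ : ℝ)
    (e : Fin p → ℝ) (f : Fin q → ℝ) :
    2 * (P *ᵥ e ⬝ᵥ (A *ᵥ e + (-(ρ * opNorm D / _root_.enorm (P *ᵥ e))) • P *ᵥ e - D *ᵥ f)) ≤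
      -(e ⬝ᵥ Q *ᵥ e) - 2 * (ρ - _root_.enorm f) * opNorm D * _root_.enorm (P *ᵥ e) := by
  have hA := hP.two_mul_mulVec_dotProduct_mulVec_of_lyapunov hLyap e
  have hD := neg_dotProduct_mulVec_le (P *ᵥ e) D f
  rw [dotProduct_sub, dotProduct_add, ← neg_div, dotProduct_div_enorm_smul_self]
  linarith

theorem sliding_mode_lyapunov_decrease {p q : ℕ}
    (A₂₂s P₂ Q₂ : Matrix (Fin p) (Fin p) ℝ)
    (hP₂ : P₂.PosDef) (hQ₂ : Q₂.PosDef)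
    (hLyap : P₂ * A₂₂s + A₂₂sᵀ * P₂ = -Q₂)
    (D₂ : Matrix (Fin p) (Fin q) ℝ) (ρ : ℝ)
    (fbar : ℝ → Fin q → ℝ) (hρ : ∀ t, _root_.enorm (fbar t) < ρ)
    (ν : ℝ → Fin p → ℝ) (ey : ℝ → Fin p → ℝ)
    (hν : ∀ t, ey t ≠ 0 →
      ν t = (-(ρ * opNorm D₂ / _root_.enorm (P₂.mulVec (ey t)))) • P₂.mulVec (ey t))
    (hν0 : ∀ t, ey t = 0 → ν t = 0)
    (hey : ∀ t, HasDerivAt ey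
      (A₂₂s.mulVec (ey t) + ν t - D₂.mulVec (fbar t)) t) :
    (∀ t,
      deriv (fun s => dotProduct (ey s) (P₂.mulVec (ey s))) t ≤
        -dotProduct (ey t) (Q₂.mulVec (ey t))
          - 2 * (ρ - _root_.enorm (fbar t)) * opNorm D₂ * _root_.enorm (P₂.mulVec (ey t))
      ∧ deriv (fun s => dotProduct (ey s) (P₂.mulVec (ey s))) t ≤ 0)
    ∧ (∀ α : ℝ, dotProduct (ey 0) (P₂.mulVec (ey 0)) ≤ α →
        ∀ t, 0 ≤ t → dotProduct (ey t) (P₂.mulVec (ey t)) ≤ α) := by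
  have hP : P₂.IsSymm := by simpa [Matrix.IsHermitian, Matrix.IsSymm] using hP₂.isHermitian
  -- At `ey t = 0` the formula also gives `0`, since `P₂ *ᵥ 0 = 0`.
  have hν' : ∀ t, ν t = (-(ρ * opNorm D₂ / _root_.enorm (P₂ *ᵥ ey t))) • P₂ *ᵥ ey t := by
    intro t
    rcases eq_or_ne (ey t) 0 with h | h
    · simp [hν0 t h, h]
    · exact hν t h
  have hV t := (hey t).dotProduct_mulVec_self hP
  have hV_le t : deriv (fun s => ey s ⬝ᵥ P₂ *ᵥ ey s) t ≤
      -(ey t ⬝ᵥ Q₂ *ᵥ ey t) - 2 * (ρ - _root_.enorm (fbar t)) * opNorm D₂ *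
        _root_.enorm (P₂ *ᵥ ey t) := by
    rw [(hV t).deriv, hν' t]
    exact two_mul_dotProduct_slidingMode_le hP hLyap D₂ ρ (ey t) (fbar t)
  have hbound_nonpos t : -(ey t ⬝ᵥ Q₂ *ᵥ ey t) - 2 * (ρ - _root_.enorm (fbar t)) * opNorm D₂ *
      _root_.enorm (P₂ *ᵥ ey t) ≤ 0 := by
    have hQ := hQ₂.posSemidef.dotProduct_mulVec_nonneg (ey t)
    have hgain := mul_nonneg (mul_nonneg (sub_nonneg.2 (hρ t).le) (opNorm_nonneg D₂))
      (enorm_nonneg (P₂ *ᵥ ey t))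
    simp only [star_trivial] at hQ
    linarith
  have hV_anti : Antitone fun s => ey s ⬝ᵥ P₂ *ᵥ ey s :=
    antitone_of_deriv_nonpos (fun s => (hV s).differentiableAt)
      fun s => (hV_le s).trans (hbound_nonpos s)
  exact ⟨fun t => ⟨hV_le t, (hV_le t).trans (hbound_nonpos t)⟩,
    fun α h0 t ht => (hV_anti ht).trans h0⟩
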